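/- arXiv:1602.04915 — 5 statements merged into one kernel-verified Lean document; each statement's English description precedes it below -/
import Mathlib

section
/- Let f : ℝ^d → ℝ be twice continuously differentiable with L-Lipschitz gradient, let 0 < α < 1/L, and let g(x) = x − α∇f(x). If C ⊆ ℝ^d is an at most countable set of critical points of f, each of which is a strict saddle, then the set {x₀ : lim_{k→∞} g^k(x₀) exists and belongs to C} has Lebesgue measure zero. -/
/-!
Near a strict saddle `l`, the derivative `A = 1 - α ∇²f(l)` of the gradient map `g` is symmetric,
has an eigenvalue `> 1` and, as `α L < 1`, no negative eigenvalue. Let `P` project onto the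
eigenvectors with eigenvalues `> 1`. On a small ball around `l`, `g` is so close to `A` that
differences of two orbits staying in the ball keep lying in the cone `‖z - P z‖ ≤ ‖P z‖` once they
start there, while their `P`-part grows geometrically; so two such orbits starting on a line
through an unstable eigenvector coincide. The translates along that eigenvector of the set of points
whose orbit stays in the ball are therefore pairwise disjoint, hence this set is null. A trajectory
converging to `l` eventually stays in the ball, so it starts in the preimage of this null set under
an iterate of `g`, which is null because `g` is injective with invertible derivative.
-/

open MeasureTheory Filter Function Set Topology InnerProductSpace RealInnerProductSpace
open scoped NNReal

theorem quasiMeasurePreserving_of_injective_of_det_ne_zero {E : Type*} [NormedAddCommGroup E]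
    [NormedSpace ℝ E] [FiniteDimensional ℝ E] [MeasurableSpace E] [BorelSpace E]
    (μ : Measure E) [μ.IsAddHaarMeasure] {f : E → E} {f' : E → E →L[ℝ] E}
    (hf' : ∀ x, HasFDerivAt f (f' x) x) (hinj : Injective f) (hdet : ∀ x, (f' x).det ≠ 0) :
    Measure.QuasiMeasurePreserving f μ μ := by
  have hmeas : Measurable f :=
    (continuous_iff_continuousAt.2 fun x ↦ (hf' x).continuousAt).measurable
  refine ⟨hmeas, Measure.AbsolutelyContinuous.mk fun t ht ht0 ↦ ?_⟩
  rw [Measure.map_apply hmeas ht]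
  have hs : MeasurableSet (f ⁻¹' t) := hmeas ht
  have hf's : ∀ x ∈ f ⁻¹' t, HasFDerivWithinAt f (f' x) (f ⁻¹' t) x :=
    fun x _ ↦ (hf' x).hasFDerivWithinAt
  have hint : ∫⁻ x in f ⁻¹' t, ENNReal.ofReal |(f' x).det| ∂μ = 0 := by
    rw [lintegral_abs_det_fderiv_eq_addHaar_image μ hs hf's hinj.injOn]
    exact measure_mono_null (image_preimage_subset f t) ht0
  rw [lintegral_eq_zero_iff' (aemeasurable_ofReal_abs_det_fderivWithin μ hs hf's)] at hint
  have hfalse : ∀ᵐ x ∂μ.restrict (f ⁻¹' t), False :=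
    hint.mono fun x hx ↦ by simp [hdet x] at hx
  exact Measure.restrict_eq_zero.1 (ae_eq_bot.1 (eventually_false_iff_eq_bot.1 hfalse))

theorem measure_eq_zero_of_sub_eq_smul_imp_eq {E : Type*} [AddCommGroup E] [Module ℝ E]
    [MeasurableSpace E] [MeasurableAdd E] (μ : Measure E) [μ.IsAddLeftInvariant] [SFinite μ]
    {S : Set E} (hS : MeasurableSet S) {v : E} (hv : v ≠ 0)
    (h : ∀ x ∈ S, ∀ y ∈ S, ∀ t : ℝ, x - y = t • v → x = y) : μ S = 0 := by
  set T : ℝ → Set E := fun t ↦ (t • v + ·) ⁻¹' S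
  have hT : ∀ t, μ (T t) = μ S := fun t ↦ measure_preimage_add μ _ S
  have hdisj : Pairwise (Disjoint on T) := by
    refine fun t s hts ↦ Set.disjoint_left.2 fun x hxt hxs ↦ hts ?_
    have hx : t • v + x = s • v + x :=
      h _ hxt _ hxs (t - s) (by rw [sub_smul, add_sub_add_right_eq_sub])
    exact smul_left_injective ℝ hv (add_right_cancel hx)
  by_contra hS0
  -- only countably many of the disjoint translates `T t` can have positive measure
  refine Cardinal.not_countable_real ?_
  have hcount := Measure.countable_meas_pos_of_disjoint_iUnion (μ := μ)
    (fun t ↦ measurable_const_add (t • v) hS) hdisj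
  simpa [hT, pos_iff_ne_zero, hS0] using hcount

theorem MeasureTheory.Measure.QuasiMeasurePreserving.measure_setOf_tendsto_iterate_eq_zero
    {X : Type*} [TopologicalSpace X] [MeasurableSpace X] {μ : Measure X} {g : X → X}
    (hg : QuasiMeasurePreserving g μ μ) {l : X} {s : Set X} (hs : s ∈ 𝓝 l)
    (hstable : μ (⋂ k, g^[k] ⁻¹' s) = 0) :
    μ {x | Tendsto (fun k ↦ g^[k] x) atTop (𝓝 l)} = 0 := by
  refine measure_mono_null (fun x hx ↦ ?_)
    (measure_iUnion_null fun n ↦ (hg.iterate n).preimage_null hstable)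
  obtain ⟨n, hn⟩ := eventually_atTop.1 (hx.eventually hs)
  refine mem_iUnion.2 ⟨n, mem_iInter.2 fun k ↦ ?_⟩
  rw [mem_preimage, ← iterate_add_apply]
  exact hn _ (Nat.le_add_left n k)

theorem norm_le_two_mul_of_norm_sub_le {E : Type*} [SeminormedAddGroup E] {z p : E}
    (h : ‖z - p‖ ≤ ‖p‖) : ‖z‖ ≤ 2 * ‖p‖ :=
  calc ‖z‖ ≤ ‖p‖ + ‖z - p‖ := norm_le_insert' z p
    _ ≤ 2 * ‖p‖ := by linarith

section Cone

variable {E : Type*} [NormedAddCommGroup E] [NormedSpace ℝ E]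

structure IsUnstableProjection (A P : E →L[ℝ] E) (c : ℝ) : Prop where
  norm_apply_le : ∀ z, ‖P z‖ ≤ ‖z‖
  norm_sub_apply_le : ∀ z, ‖z - P z‖ ≤ ‖z‖
  apply_comm : ∀ z, P (A z) = A (P z)
  expand : ∀ z, c * ‖P z‖ ≤ ‖A (P z)‖
  nonexpand : ∀ z, ‖A (z - P z)‖ ≤ ‖z - P z‖

namespace IsUnstableProjection

variable {A P : E →L[ℝ] E} {c ε : ℝ}

theorem mapsTo_cone (hP : IsUnstableProjection A P c) (hε : 0 ≤ ε) (hcε : 1 + 4 * ε ≤ c)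
    {z w : E} (hz : ‖z - P z‖ ≤ ‖P z‖) (hw : ‖w‖ ≤ ε * ‖z‖) :
    ‖A z + w - P (A z + w)‖ ≤ ‖P (A z + w)‖ ∧ (c - 2 * ε) * ‖P z‖ ≤ ‖P (A z + w)‖ := by
  have hw' : ‖w‖ ≤ 2 * ε * ‖P z‖ := by
    nlinarith [norm_le_two_mul_of_norm_sub_le hz]
  have hexpand : (c - 2 * ε) * ‖P z‖ ≤ ‖P (A z + w)‖ := by
    rw [map_add, hP.apply_comm]
    have := norm_sub_le (A (P z) + P w) (P w)
    rw [add_sub_cancel_right] at this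
    linarith [hP.expand z, hP.norm_apply_le w]
  refine ⟨?_, hexpand⟩
  calc ‖A z + w - P (A z + w)‖ = ‖A (z - P z) + (w - P w)‖ := by
        rw [map_add, hP.apply_comm, map_sub]; abel_nf
    _ ≤ ‖z - P z‖ + ‖w‖ := norm_add_le_of_le (hP.nonexpand z) (hP.norm_sub_apply_le w)
    _ ≤ (c - 2 * ε) * ‖P z‖ := by nlinarith [norm_nonneg (P z)]
    _ ≤ ‖P (A z + w)‖ := hexpand

theorem eq_zero_of_forall_norm_le (hP : IsUnstableProjection A P c) (hε : 0 ≤ ε)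
    (hcε : 1 + 4 * ε < c) {δ : ℕ → E} (hδ : ∀ k, ‖δ (k + 1) - A (δ k)‖ ≤ ε * ‖δ k‖)
    {R : ℝ} (hR : ∀ k, ‖δ k‖ ≤ R) (h0 : ‖δ 0 - P (δ 0)‖ ≤ ‖P (δ 0)‖) : δ 0 = 0 := by
  have hcone : ∀ k, ‖δ k - P (δ k)‖ ≤ ‖P (δ k)‖ ∧
      (c - 2 * ε) ^ k * ‖P (δ 0)‖ ≤ ‖P (δ k)‖ := by
    intro k
    induction k with
    | zero => simpa using h0
    | succ k ih =>
      have hstep := hP.mapsTo_cone hε hcε.le ih.1 (hδ k)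
      rw [add_sub_cancel] at hstep
      refine ⟨hstep.1, ?_⟩
      calc (c - 2 * ε) ^ (k + 1) * ‖P (δ 0)‖
          = (c - 2 * ε) * ((c - 2 * ε) ^ k * ‖P (δ 0)‖) := by ring
        _ ≤ (c - 2 * ε) * ‖P (δ k)‖ := mul_le_mul_of_nonneg_left ih.2 (by linarith)
        _ ≤ ‖P (δ (k + 1))‖ := hstep.2
  have hP0 : ‖P (δ 0)‖ = 0 := by
    by_contra hne
    have hpos : 0 < ‖P (δ 0)‖ := (norm_nonneg _).lt_of_ne' hne
    obtain ⟨k, hk⟩ := pow_unbounded_of_one_lt (R / ‖P (δ 0)‖) (by linarith : 1 < c - 2 * ε)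
    rw [div_lt_iff₀ hpos] at hk
    linarith [(hcone k).2, hP.norm_apply_le (δ k), hR k]
  simpa [hP0] using norm_le_two_mul_of_norm_sub_le h0

theorem measure_iInter_preimage_iterate_eq_zero [MeasurableSpace E] [MeasurableAdd E]
    (μ : Measure E) [μ.IsAddLeftInvariant] [SFinite μ] (hP : IsUnstableProjection A P c)
    {v : E} (hv : v ≠ 0) (hPv : P v = v) {ε : ℝ≥0} (hcε : 1 + 4 * ε < c) {g : E → E}
    (hg : Measurable g) {s : Set E} (hs : MeasurableSet s) (hbdd : Bornology.IsBounded s)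
    (hgs : ApproximatesLinearOn g A s ε) : μ (⋂ k, g^[k] ⁻¹' s) = 0 := by
  refine measure_eq_zero_of_sub_eq_smul_imp_eq μ (.iInter fun k ↦ hg.iterate k hs) hv ?_
  intro x hx y hy t hxy
  simp only [mem_iInter, mem_preimage] at hx hy
  obtain ⟨R, hR⟩ := Metric.isBounded_iff.1 hbdd
  refine sub_eq_zero.1 (hP.eq_zero_of_forall_norm_le ε.coe_nonneg hcε
    (δ := fun k ↦ g^[k] x - g^[k] y) (R := R) (fun k ↦ ?_) (fun k ↦ ?_) ?_)
  · simpa only [iterate_succ_apply'] using hgs _ (hx k) _ (hy k)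
  · simpa only [dist_eq_norm] using hR (hx k) (hy k)
  · simp [hxy, hPv]

end IsUnstableProjection

end Cone

section Spectral

variable {E : Type*} [NormedAddCommGroup E] [InnerProductSpace ℝ E] {ι : Type*} [Fintype ι]

theorem LinearMap.IsSymmetric.inner_apply_eq_mul_inner {T : E →ₗ[ℝ] E} (hT : T.IsSymmetric)
    {u : E} {μ : ℝ} (hu : T u = μ • u) (z : E) : ⟪u, T z⟫ = μ * ⟪u, z⟫ := by
  rw [← hT, hu, real_inner_smul_left]

namespace OrthonormalBasis

theorem norm_le_norm_of_forall_abs_inner_le (b : OrthonormalBasis ι ℝ E) {u v : E}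
    (h : ∀ i, |⟪b i, u⟫| ≤ |⟪b i, v⟫|) : ‖u‖ ≤ ‖v‖ := by
  rw [← b.repr.norm_map u, ← b.repr.norm_map v, EuclideanSpace.norm_eq, EuclideanSpace.norm_eq]
  gcongr with i
  simpa only [b.repr_apply_apply, Real.norm_eq_abs] using h i

theorem inner_sum_rankOne_apply [DecidableEq ι] (b : OrthonormalBasis ι ℝ E) (U : Finset ι)
    (j : ι) (z : E) :
    ⟪b j, (∑ i ∈ U, rankOne ℝ (b i) (b i)) z⟫ = if j ∈ U then ⟪b j, z⟫ else 0 := by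
  simp [inner_sum, real_inner_smul_right, orthonormal_iff_ite.1 b.orthonormal j]

theorem sum_rankOne_apply_of_mem (b : OrthonormalBasis ι ℝ E) {U : Finset ι} {j : ι}
    (hj : j ∈ U) : (∑ i ∈ U, rankOne ℝ (b i) (b i)) (b j) = b j := by
  classical
  simp [orthonormal_iff_ite.1 b.orthonormal, hj]

theorem isUnstableProjection_sum_rankOne (b : OrthonormalBasis ι ℝ E) {A : E →L[ℝ] E}
    (hA : (A : E →ₗ[ℝ] E).IsSymmetric) {a : ι → ℝ} (hb : ∀ i, A (b i) = a i • b i)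
    {U : Finset ι} {c : ℝ} (hc : 0 ≤ c) (hU : ∀ i ∈ U, c ≤ a i) (hUc : ∀ i ∉ U, |a i| ≤ 1) :
    IsUnstableProjection A (∑ i ∈ U, rankOne ℝ (b i) (b i)) c := by
  classical
  set P := ∑ i ∈ U, rankOne ℝ (b i) (b i)
  have hA_inner : ∀ j z, ⟪b j, A z⟫ = a j * ⟪b j, z⟫ := fun j ↦
    hA.inner_apply_eq_mul_inner (hb j)
  have hP_inner : ∀ j z, ⟪b j, P z⟫ = if j ∈ U then ⟪b j, z⟫ else 0 :=
    b.inner_sum_rankOne_apply U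
  have hQ_inner : ∀ j z, ⟪b j, z - P z⟫ = if j ∈ U then 0 else ⟪b j, z⟫ := fun j z ↦ by
    rw [inner_sub_right, hP_inner]; split_ifs <;> ring
  refine ⟨fun z ↦ b.norm_le_norm_of_forall_abs_inner_le fun j ↦ ?_,
    fun z ↦ b.norm_le_norm_of_forall_abs_inner_le fun j ↦ ?_,
    fun z ↦ ext_inner_left_basis b.toBasis fun j ↦ ?_, fun z ↦ ?_,
    fun z ↦ b.norm_le_norm_of_forall_abs_inner_le fun j ↦ ?_⟩
  · rw [hP_inner]; split_ifs <;> simp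
  · rw [hQ_inner]; split_ifs <;> simp
  · simp only [OrthonormalBasis.coe_toBasis, hP_inner, hA_inner]; split_ifs <;> simp
  · rw [← Real.norm_of_nonneg hc, ← norm_smul]
    refine b.norm_le_norm_of_forall_abs_inner_le fun j ↦ ?_
    rw [real_inner_smul_right, hA_inner, hP_inner]
    split_ifs with hj
    · rw [abs_mul, abs_mul, abs_of_nonneg hc, abs_of_nonneg (hc.trans (hU j hj))]
      gcongr
      exact hU j hj
    · simp
  · rw [hA_inner, hQ_inner]
    split_ifs with hj
    · simp
    · rw [abs_mul]
      exact mul_le_of_le_one_left (abs_nonneg _) (hUc j hj)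

end OrthonormalBasis

variable [FiniteDimensional ℝ E]

theorem LinearMap.IsSymmetric.exists_isUnstableProjection {A : E →L[ℝ] E}
    (hA : (A : E →ₗ[ℝ] E).IsSymmetric) (hlow : ∀ v, -‖v‖ ^ 2 ≤ ⟪v, A v⟫)
    (hexp : ∃ v, ‖v‖ ^ 2 < ⟪v, A v⟫) :
    ∃ c, 1 < c ∧ ∃ P : E →L[ℝ] E, ∃ v ≠ 0, P v = v ∧ IsUnstableProjection A P c := by
  classical
  set b := hA.eigenvectorBasis rfl
  set a := hA.eigenvalues rfl
  have hb : ∀ i, A (b i) = a i • b i := hA.apply_eigenvectorBasis rfl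
  have hA_inner : ∀ i v, ⟪b i, A v⟫ = a i * ⟪b i, v⟫ := fun i ↦
    hA.inner_apply_eq_mul_inner (hb i)
  set U := Finset.univ.filter (1 < a ·)
  have hU : U.Nonempty := by
    by_contra hU
    obtain ⟨v, hv⟩ := hexp
    refine hv.not_ge ?_
    rw [← b.sum_inner_mul_inner v (A v), ← b.sum_sq_inner_right v]
    refine Finset.sum_le_sum fun i _ ↦ ?_
    have hai : a i ≤ 1 := not_lt.1 fun h ↦ hU ⟨i, by simp [U, h]⟩
    rw [hA_inner, real_inner_comm]
    nlinarith [sq_nonneg ⟪b i, v⟫]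
  have hc : 1 < U.inf' hU a := (Finset.lt_inf'_iff _).2 fun i hi ↦ (Finset.mem_filter.1 hi).2
  obtain ⟨i₀, hi₀⟩ := hU
  refine ⟨_, hc, _, b i₀, b.orthonormal.ne_zero i₀, b.sum_rankOne_apply_of_mem hi₀,
    b.isUnstableProjection_sum_rankOne hA hb (zero_le_one.trans hc.le)
      (fun i hi ↦ Finset.inf'_le a hi)
      fun i hi ↦ abs_le.2 ⟨?_, not_lt.1 fun h ↦ hi (by simp [U, h])⟩⟩
  simpa [hA_inner, b.norm_eq_one] using hlow (b i)

theorem HasStrictFDerivAt.exists_mem_nhds_measure_iInter_preimage_iterate_eq_zero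
    [MeasurableSpace E] [BorelSpace E] (μ : Measure E) [μ.IsAddHaarMeasure] {g : E → E}
    (hg : Measurable g) {A : E →L[ℝ] E} {l : E} (hgl : HasStrictFDerivAt g A l)
    (hA : (A : E →ₗ[ℝ] E).IsSymmetric) (hlow : ∀ v, -‖v‖ ^ 2 ≤ ⟪v, A v⟫)
    (hexp : ∃ v, ‖v‖ ^ 2 < ⟪v, A v⟫) : ∃ s ∈ 𝓝 l, μ (⋂ k, g^[k] ⁻¹' s) = 0 := by
  obtain ⟨c, hc, P, v, hv, hPv, hP⟩ := hA.exists_isUnstableProjection hlow hexp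
  obtain ⟨ε, hε, hcε⟩ : ∃ ε : ℝ≥0, 0 < ε ∧ 1 + 4 * (ε : ℝ) < c :=
    ⟨((c - 1) / 5).toNNReal, by simpa using hc, by rw [Real.coe_toNNReal _ (by linarith)]; linarith⟩
  obtain ⟨t, ht, hgt⟩ := hgl.approximates_deriv_on_nhds (.inr hε)
  obtain ⟨ρ, hρ, hρt⟩ := Metric.nhds_basis_closedBall.mem_iff.1 ht
  refine ⟨_, Metric.closedBall_mem_nhds l hρ, hP.measure_iInter_preimage_iterate_eq_zero μ hv hPv
    hcε hg Metric.isClosed_closedBall.measurableSet Metric.isBounded_closedBall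
    (hgt.mono_set hρt)⟩

end Spectral

theorem ContinuousLinearMap.det_one_sub_ne_zero {E : Type*} [NormedAddCommGroup E]
    [NormedSpace ℝ E] [CompleteSpace E] {T : E →L[ℝ] E} (hT : ‖T‖ < 1) :
    (1 - T).det ≠ 0 :=
  (LinearMap.isUnit_det _ ((Units.oneSub T hT).isUnit.map toLinearMapRingHom)).ne_zero

theorem ContinuousLinearMap.inner_one_sub_apply_nonneg {E : Type*} [NormedAddCommGroup E]
    [InnerProductSpace ℝ E] {T : E →L[ℝ] E} (hT : ‖T‖ ≤ 1) (v : E) : 0 ≤ ⟪v, (1 - T) v⟫ := by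
  rw [sub_apply, one_apply_eq_self, inner_sub_right, real_inner_self_eq_norm_sq]
  nlinarith [real_inner_le_norm v (T v), T.le_opNorm v, norm_nonneg v, norm_nonneg (T v)]

theorem LipschitzWith.injective_id_sub {F : Type*} [NormedAddCommGroup F] {φ : F → F}
    {K : ℝ≥0} (hφ : LipschitzWith K φ) (hK : K < 1) : Injective fun x ↦ x - φ x := by
  simpa only [sub_eq_add_neg, id, Pi.neg_apply] using
    (AntilipschitzWith.id.add_lipschitzWith hφ.neg (by simpa using hK)).injective

section Gradient

variable {E : Type*} [NormedAddCommGroup E] [InnerProductSpace ℝ E] [CompleteSpace E]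
  {f : E → ℝ}

theorem inner_fderiv_gradient_apply (f : E → ℝ) (x u v : E) :
    ⟪fderiv ℝ (gradient f) x u, v⟫ = fderiv ℝ (fderiv ℝ f) x u v := by
  rw [show gradient f = (toDual ℝ E).symm ∘ fderiv ℝ f from rfl,
    LinearIsometryEquiv.comp_fderiv]
  exact toDual_symm_apply

theorem ContDiffAt.isSymmetric_fderiv_gradient {x : E} (hf : ContDiffAt ℝ 2 f x) :
    (fderiv ℝ (gradient f) x : E →ₗ[ℝ] E).IsSymmetric := fun u v ↦ by
  show ⟪fderiv ℝ (gradient f) x u, v⟫ = ⟪u, fderiv ℝ (gradient f) x v⟫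
  rw [real_inner_comm _ u, inner_fderiv_gradient_apply, inner_fderiv_gradient_apply]
  exact hf.isSymmSndFDerivAt (by simp [minSmoothness_of_isRCLikeNormedField]) u v

theorem ContDiff.contDiff_gradient {n m : WithTop ℕ∞} (hf : ContDiff ℝ n f) (hmn : m + 1 ≤ n) :
    ContDiff ℝ m (gradient f) :=
  (toDual ℝ E).symm.toContinuousLinearEquiv.contDiff.comp (hf.fderiv_right hmn)

noncomputable def gradientStep (f : E → ℝ) (α : ℝ) (x : E) : E := x - α • gradient f x

variable {α : ℝ}

theorem hasFDerivAt_gradientStep {x : E} (hf : DifferentiableAt ℝ (gradient f) x) :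
    HasFDerivAt (gradientStep f α) (1 - α • fderiv ℝ (gradient f) x) x :=
  (hasFDerivAt_id x).sub (hf.hasFDerivAt.const_smul α)

theorem injective_gradientStep {K : ℝ≥0} (hf : LipschitzWith K (gradient f)) (hα : 0 ≤ α)
    (hαK : α * K < 1) : Injective (gradientStep f α) := by
  refine ((lipschitzWith_smul α).comp hf).injective_id_sub ?_
  rw [← NNReal.coe_lt_coe]
  simpa [abs_of_nonneg hα] using hαK

theorem measure_setOf_tendsto_iterate_gradientStep_eq_zero [FiniteDimensional ℝ E]
    [MeasurableSpace E] [BorelSpace E] (μ : Measure E) [μ.IsAddHaarMeasure] {K : ℝ≥0}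
    (hf : ContDiff ℝ 2 f) (hlip : LipschitzWith K (gradient f)) (hα : 0 < α) (hαK : α * K < 1)
    {l : E} (hl : ∃ v, ⟪v, fderiv ℝ (gradient f) l v⟫ < 0) :
    μ {x | Tendsto (fun k ↦ (gradientStep f α)^[k] x) atTop (𝓝 l)} = 0 := by
  have hgrad : ContDiff ℝ 1 (gradient f) := hf.contDiff_gradient (by norm_num)
  have hH : ∀ x, ‖α • fderiv ℝ (gradient f) x‖ < 1 := fun x ↦
    calc ‖α • fderiv ℝ (gradient f) x‖ = α * ‖fderiv ℝ (gradient f) x‖ := by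
          rw [norm_smul, Real.norm_of_nonneg hα.le]
      _ ≤ α * K := by gcongr; exact norm_fderiv_le_of_lipschitz ℝ hlip
      _ < 1 := hαK
  have hderiv : ∀ x, HasFDerivAt (gradientStep f α) (1 - α • fderiv ℝ (gradient f) x) x :=
    fun x ↦ hasFDerivAt_gradientStep (hgrad.differentiable one_ne_zero x)
  have hqmp := quasiMeasurePreserving_of_injective_of_det_ne_zero μ hderiv
    (injective_gradientStep hlip hα.le hαK) fun x ↦ ContinuousLinearMap.det_one_sub_ne_zero (hH x)
  have hstrict : HasStrictFDerivAt (gradientStep f α) (1 - α • fderiv ℝ (gradient f) l) l :=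
    (contDiff_id.sub (hgrad.const_smul α)).contDiffAt.hasStrictFDerivAt' (hderiv l) one_ne_zero
  have hsymm : ((1 - α • fderiv ℝ (gradient f) l : E →L[ℝ] E) : E →ₗ[ℝ] E).IsSymmetric := by
    rw [ContinuousLinearMap.toLinearMap_sub, ContinuousLinearMap.toLinearMap_smul,
      ContinuousLinearMap.toLinearMap_one]
    exact LinearMap.IsSymmetric.one.sub
      (hf.contDiffAt.isSymmetric_fderiv_gradient.smul (conj_trivial α))
  have hexp : ∃ v, ‖v‖ ^ 2 < ⟪v, (1 - α • fderiv ℝ (gradient f) l) v⟫ := by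
    obtain ⟨v, hv⟩ := hl
    refine ⟨v, ?_⟩
    rw [sub_apply, one_apply_eq_self, inner_sub_right, smul_apply,
      real_inner_smul_right, real_inner_self_eq_norm_sq]
    nlinarith
  obtain ⟨s, hs, hnull⟩ := hstrict.exists_mem_nhds_measure_iInter_preimage_iterate_eq_zero μ
    hqmp.measurable hsymm (fun w ↦ (neg_nonpos.2 (sq_nonneg _)).trans
      (ContinuousLinearMap.inner_one_sub_apply_nonneg (hH l).le w)) hexp
  exact hqmp.measure_setOf_tendsto_iterate_eq_zero hs hnull

end Gradient

theorem gradient_descent_avoids_countable_strict_saddles_general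
    {d : ℕ} (f : EuclideanSpace ℝ (Fin d) → ℝ) (L α : ℝ)
    (hf : ContDiff ℝ 2 f)
    (hlip : ∀ x y, ‖gradient f x - gradient f y‖ ≤ L * ‖x - y‖)
    (hα : 0 < α) (hαL : α < 1 / L)
    (g : EuclideanSpace ℝ (Fin d) → EuclideanSpace ℝ (Fin d))
    (hg : ∀ x, g x = x - α • gradient f x)
    (C : Set (EuclideanSpace ℝ (Fin d))) (hcount : C.Countable)
    (hsaddle : ∀ x ∈ C, ∃ v, (inner ℝ v (fderiv ℝ (gradient f) x v) : ℝ) < 0) :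
    volume {x₀ | ∃ l ∈ C, Tendsto (fun k => g^[k] x₀) atTop (nhds l)} = 0 := by
  obtain rfl : g = gradientStep f α := funext hg
  have hL : 0 < L := one_div_pos.1 (hα.trans hαL)
  have hlipW : LipschitzWith L.toNNReal (gradient f) := .of_dist_le_mul fun x y ↦ by
    simpa [dist_eq_norm, hL.le] using hlip x y
  have hαK : α * L.toNNReal < 1 := by
    rw [Real.coe_toNNReal L hL.le]
    exact (lt_div_iff₀ hL).1 (by simpa using hαL)
  rw [show {x₀ | ∃ l ∈ C, Tendsto (fun k ↦ (gradientStep f α)^[k] x₀) atTop (𝓝 l)} =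
      ⋃ l ∈ C, {x₀ | Tendsto (fun k ↦ (gradientStep f α)^[k] x₀) atTop (𝓝 l)} by ext; simp,
    measure_biUnion_null_iff hcount]
  exact fun l hl ↦ measure_setOf_tendsto_iterate_gradientStep_eq_zero volume hf hlipW hα hαK
    (hsaddle l hl)

/-- If `C` is an at most countable set of critical points of `f`, each a strict
saddle, then the set of initializations from which gradient descent (with step
size `0 < α < 1/L`) converges to a point of `C` has Lebesgue measure zero. -/
theorem gradient_descent_avoids_countable_strict_saddles
    {d : ℕ} (f : EuclideanSpace ℝ (Fin d) → ℝ) (L α : ℝ)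
    (hf : ContDiff ℝ 2 f) (hL : 0 < L)
    (hlip : ∀ x y, ‖gradient f x - gradient f y‖ ≤ L * ‖x - y‖)
    (hα : 0 < α) (hαL : α < 1 / L)
    (g : EuclideanSpace ℝ (Fin d) → EuclideanSpace ℝ (Fin d))
    (hg : ∀ x, g x = x - α • gradient f x)
    (C : Set (EuclideanSpace ℝ (Fin d))) (hcount : C.Countable)
    (hcrit : ∀ x ∈ C, gradient f x = 0)
    (hsaddle : ∀ x ∈ C, ∃ v, (inner ℝ v (fderiv ℝ (gradient f) x v) : ℝ) < 0) :
    volume {x₀ | ∃ l ∈ C, Tendsto (fun k => g^[k] x₀) atTop (nhds l)} = 0 :=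
  gradient_descent_avoids_countable_strict_saddles_general f L α hf hlip hα hαL g hg C hcount
    hsaddle
end

section
/- Let f : ℝ^d → ℝ be twice continuously differentiable with L-Lipschitz gradient and let 0 < α < 1/L. Then the gradient map g(x) = x − α∇f(x) is a diffeomorphism of ℝ^d: g is a bijection of ℝ^d onto itself, g is continuously differentiable, and its inverse g⁻¹ is continuously differentiable. -/
/-!
With `φ = α • ∇f`, the gradient map is `g = id - φ`, and `φ` is a contraction since `αL < 1`.
A perturbation of the identity by a contraction is a homeomorphism of a Banach space (the
quantitative inverse function theorem, `ApproximatesLinearOn.toHomeomorph`). Its derivative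
`1 - φ'(x)` is invertible by the Neumann series, as `‖φ'(x)‖ ≤ αL < 1`, so the inverse is as
smooth as `g`, which is `C¹` because `f` is `C²`.
-/

open Function Set NNReal

namespace ContractingWith

variable {E : Type*} [NormedAddCommGroup E] [NormedSpace ℝ E] {K : ℝ≥0} {φ : E → E}

theorem approximatesLinearOn_id_sub (hφ : ContractingWith K φ) :
    ApproximatesLinearOn (fun x => x - φ x)
      (ContinuousLinearEquiv.refl ℝ E : E →L[ℝ] E) univ K := by
  intro x _ y _
  calc ‖x - φ x - (y - φ y) - (x - y)‖ = dist (φ y) (φ x) := by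
        rw [dist_eq_norm]; congr 1; abel
    _ ≤ K * dist y x := hφ.2.dist_le_mul y x
    _ = K * ‖x - y‖ := by rw [dist_comm, dist_eq_norm]

/-- The first disjunct covers the zero space, where `‖id‖₊⁻¹ = 0⁻¹ = 0` in `ℝ≥0`. -/
theorem subsingleton_or_lt_inv_nnnorm_refl (hφ : ContractingWith K φ) :
    Subsingleton E ∨
      K < ‖((ContinuousLinearEquiv.refl ℝ E).symm : E →L[ℝ] E)‖₊⁻¹ := by
  rcases subsingleton_or_nontrivial E with hE | hE
  · exact .inl hE
  · right
    simpa using hφ.1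

variable [CompleteSpace E]

noncomputable def idSubHomeomorph (hφ : ContractingWith K φ) : E ≃ₜ E :=
  hφ.approximatesLinearOn_id_sub.toHomeomorph _ hφ.subsingleton_or_lt_inv_nnnorm_refl

@[simp]
theorem coe_idSubHomeomorph (hφ : ContractingWith K φ) :
    ⇑hφ.idSubHomeomorph = fun x => x - φ x :=
  rfl

theorem bijective_id_sub (hφ : ContractingWith K φ) : Bijective fun x => x - φ x :=
  hφ.idSubHomeomorph.bijective

theorem hasFDerivAt_id_sub (hφ : ContractingWith K φ) {x : E} (hx : DifferentiableAt ℝ φ x) :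
    HasFDerivAt (fun x => x - φ x)
      (ContinuousLinearEquiv.ofUnit (Units.oneSub (fderiv ℝ φ x)
        ((norm_fderiv_le_of_lipschitz ℝ hφ.2).trans_lt hφ.1)) : E →L[ℝ] E) x :=
  (hasFDerivAt_id x).sub hx.hasFDerivAt

theorem contDiff_invFun_id_sub {n : WithTop ℕ∞} (hφ : ContractingWith K φ)
    (hC : ContDiff ℝ n φ) (hn : n ≠ 0) : ContDiff ℝ n (invFun fun x => x - φ x) := by
  have h := hφ.idSubHomeomorph.contDiff_symm
    (fun x => hφ.hasFDerivAt_id_sub (hC.differentiable hn x)) (contDiff_id.sub hC)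
  rwa [← hφ.coe_idSubHomeomorph, invFun_eq_of_injective_of_rightInverse
    hφ.idSubHomeomorph.injective hφ.idSubHomeomorph.apply_symm_apply]

end ContractingWith

theorem ContDiff.gradient {F : Type*} [NormedAddCommGroup F] [InnerProductSpace ℝ F]
    [CompleteSpace F] {f : F → ℝ} {m n : WithTop ℕ∞} (hf : ContDiff ℝ n f) (hmn : m + 1 ≤ n) :
    ContDiff ℝ m (gradient f) :=
  (InnerProductSpace.toDual ℝ F).symm.toLinearIsometry.contDiff.comp (hf.fderiv_right hmn)

theorem contractingWith_const_smul_of_norm_sub_le {E : Type*} [NormedAddCommGroup E]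
    [NormedSpace ℝ E] {ψ : E → E} {L α : ℝ} (hψ : ∀ x y, ‖ψ x - ψ y‖ ≤ L * ‖x - y‖)
    (hα : 0 < α) (hαL : α < 1 / L) : ContractingWith (α * L).toNNReal fun x => α • ψ x := by
  constructor
  · rw [Real.toNNReal_lt_one]
    rcases le_or_gt L 0 with hL | hL
    · exact (mul_nonpos_of_nonneg_of_nonpos hα.le hL).trans_lt one_pos
    · exact (lt_div_iff₀ hL).mp hαL
  · refine LipschitzWith.of_dist_le_mul fun x y => ?_
    calc dist (α • ψ x) (α • ψ y) = α * ‖ψ x - ψ y‖ := by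
          rw [dist_eq_norm, ← smul_sub, norm_smul, Real.norm_of_nonneg hα.le]
      _ ≤ α * (L * dist x y) := by rw [dist_eq_norm]; gcongr; exact hψ x y
      _ ≤ (α * L).toNNReal * dist x y := by
          rw [← mul_assoc]; gcongr; exact Real.le_coe_toNNReal _

theorem gradient_map_is_diffeomorphism_general
    {d : ℕ} (f : EuclideanSpace ℝ (Fin d) → ℝ) (L α : ℝ)
    (hf : ContDiff ℝ 2 f)
    (hlip : ∀ x y, ‖gradient f x - gradient f y‖ ≤ L * ‖x - y‖)
    (hα : 0 < α) (hαL : α < 1 / L)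
    (g : EuclideanSpace ℝ (Fin d) → EuclideanSpace ℝ (Fin d))
    (hg : ∀ x, g x = x - α • gradient f x) :
    Function.Bijective g ∧ ContDiff ℝ 1 g ∧ ContDiff ℝ 1 (Function.invFun g) := by
  have hφ := contractingWith_const_smul_of_norm_sub_le hlip hα hαL
  have hφC : ContDiff ℝ 1 fun x => α • gradient f x :=
    (hf.gradient (by norm_num)).const_smul α
  obtain rfl : g = fun x => x - α • gradient f x := funext hg
  exact ⟨hφ.bijective_id_sub, contDiff_id.sub hφC, hφ.contDiff_invFun_id_sub hφC one_ne_zero⟩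

/-- For a `C²` function `f` with `L`-Lipschitz gradient and step size
`0 < α < 1/L`, the gradient map `g(x) = x - α∇f(x)` is a diffeomorphism of
`ℝ^d`: it is a bijection, continuously differentiable, and its inverse is
continuously differentiable. -/
theorem gradient_map_is_diffeomorphism
    {d : ℕ} (f : EuclideanSpace ℝ (Fin d) → ℝ) (L α : ℝ)
    (hf : ContDiff ℝ 2 f) (hL : 0 < L)
    (hlip : ∀ x y, ‖gradient f x - gradient f y‖ ≤ L * ‖x - y‖)
    (hα : 0 < α) (hαL : α < 1 / L)
    (g : EuclideanSpace ℝ (Fin d) → EuclideanSpace ℝ (Fin d))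
    (hg : ∀ x, g x = x - α • gradient f x) :
    Function.Bijective g ∧ ContDiff ℝ 1 g ∧ ContDiff ℝ 1 (Function.invFun g) :=
  gradient_map_is_diffeomorphism_general f L α hf hlip hα hαL g hg
end

section
/- Let f : ℝ^d → ℝ be differentiable with L-Lipschitz gradient and let 0 < α < 1/L. For y ∈ ℝ^d, let x_y be the unique minimizer of ψ_y(x) = (1/2)‖x − y‖² − α f(x). Then x_y − α∇f(x_y) = y; in particular, the gradient map g(x) = x − α∇f(x) is surjective onto ℝ^d. -/
/-!
At a minimizer `x` of `ψ_y(z) = ½‖z - y‖² - α f(z)` the gradient `x - y - α ∇f(x)` of `ψ_y`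
vanishes, which is the first claim. For surjectivity, `g x = y` says that `x` is a fixed point
of `x ↦ y + α ∇f(x)`; this map is an `αL`-contraction, so Banach's fixed point theorem
provides `x`.
-/

open NNReal

theorem ContractingWith.surjective_id_sub {E : Type*} [NormedAddCommGroup E] [CompleteSpace E]
    {K : ℝ≥0} {h : E → E} (hh : ContractingWith K h) : Function.Surjective fun x => x - h x := by
  intro y
  have hT : ContractingWith K fun x => y + h x :=
    ⟨hh.1, fun a b => by simpa only [edist_add_left] using hh.2 a b⟩
  refine ⟨ContractingWith.fixedPoint _ hT, ?_⟩
  have hfix : y + h (ContractingWith.fixedPoint _ hT) = ContractingWith.fixedPoint _ hT :=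
    hT.fixedPoint_isFixedPt
  exact sub_eq_of_eq_add hfix.symm

theorem contractingWith_smul_of_norm_sub_le {E : Type*} [NormedAddCommGroup E] [NormedSpace ℝ E]
    {G : E → E} {L α : ℝ} (hG : ∀ x y, ‖G x - G y‖ ≤ L * ‖x - y‖) (hα : 0 ≤ α)
    (hαL : α * L < 1) : ContractingWith (α * L).toNNReal fun x => α • G x := by
  refine ⟨Real.toNNReal_lt_one.mpr hαL, LipschitzWith.of_dist_le' fun x y => ?_⟩
  calc dist (α • G x) (α • G y) = α * ‖G x - G y‖ := by
        rw [dist_eq_norm, ← smul_sub, norm_smul, Real.norm_of_nonneg hα]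
    _ ≤ α * (L * ‖x - y‖) := mul_le_mul_of_nonneg_left (hG x y) hα
    _ = α * L * dist x y := by rw [dist_eq_norm, mul_assoc]

section Hilbert

variable {E : Type*} [NormedAddCommGroup E] [InnerProductSpace ℝ E] [CompleteSpace E]

theorem hasGradientAt_half_norm_sub_sq_sub_mul {f : E → ℝ} {x : E} (hf : DifferentiableAt ℝ f x)
    (y : E) (α : ℝ) :
    HasGradientAt (fun z => 1 / 2 * ‖z - y‖ ^ 2 - α * f z) (x - y - α • gradient f x) x := by
  rw [hasGradientAt_iff_hasFDerivAt]
  have hsq := ((hasFDerivAt_id x).sub_const y).norm_sq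
  refine ((hsq.const_mul (1 / 2 : ℝ)).sub (hf.hasGradientAt.hasFDerivAt.const_mul α)).congr_fderiv ?_
  ext v
  simp only [InnerProductSpace.toDual_apply_apply, sub_apply,
    smul_apply, ContinuousLinearMap.comp_apply, ContinuousLinearMap.id_apply,
    innerSL_apply_apply, inner_sub_left, real_inner_smul_left, smul_eq_mul, id]
  ring

theorem sub_smul_gradient_eq_of_isLocalMin {f : E → ℝ} {x y : E} {α : ℝ}
    (hf : DifferentiableAt ℝ f x) (hmin : IsLocalMin (fun z => 1 / 2 * ‖z - y‖ ^ 2 - α * f z) x) :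
    x - α • gradient f x = y := by
  have hzero := hmin.hasFDerivAt_eq_zero (hasGradientAt_half_norm_sub_sq_sub_mul hf y α).hasFDerivAt
  rw [LinearIsometryEquiv.map_eq_zero_iff, sub_right_comm, sub_eq_zero] at hzero
  exact hzero

end Hilbert

/-- For a differentiable `f` with `L`-Lipschitz gradient and `0 < α < 1/L`: if
`x_y` minimizes `ψ_y(x) = (1/2)‖x - y‖² - α f(x)`, then `x_y - α∇f(x_y) = y`;
in particular the gradient map `g(x) = x - α∇f(x)` is surjective. -/
theorem gradient_map_surjective
    {d : ℕ} (f : EuclideanSpace ℝ (Fin d) → ℝ) (L α : ℝ)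
    (hf : Differentiable ℝ f) (hL : 0 < L)
    (hlip : ∀ x y, ‖gradient f x - gradient f y‖ ≤ L * ‖x - y‖)
    (hα : 0 < α) (hαL : α < 1 / L)
    (g : EuclideanSpace ℝ (Fin d) → EuclideanSpace ℝ (Fin d))
    (hg : ∀ x, g x = x - α • gradient f x) :
    (∀ y xy, (∀ z, 1 / 2 * ‖xy - y‖ ^ 2 - α * f xy ≤ 1 / 2 * ‖z - y‖ ^ 2 - α * f z) →
      g xy = y) ∧
    Function.Surjective g := by
  obtain rfl : g = fun x => x - α • gradient f x := funext hg
  refine ⟨fun y xy hmin => sub_smul_gradient_eq_of_isLocalMin (hf xy) (.of_forall hmin), ?_⟩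
  have hαL' : α * L < 1 := (lt_div_iff₀ hL).mp hαL
  exact (contractingWith_smul_of_norm_sub_le hlip hα.le hαL').surjective_id_sub
end

section
/- Let β ≥ 1, 0 < d ≤ 1, and let (e_k)_{k≥0} be a sequence of real numbers with 0 ≤ e_{k+1} ≤ e_k, e_k < 1, and e_k ≤ β (e_k − e_{k+1})^{1/d} for all k. Then e_{k+1} ≤ (1 − β^{−d}) e_k for all k, and hence e_k ≤ (1 − β^{−d})^k e_0, so e_k converges to 0 at a geometric (linear) rate. -/
open Filter Real

theorem le_one_sub_rpow_neg_mul_of_le_mul_rpow_one_div {β d x y : ℝ} (hβ : 0 < β) (hd0 : 0 < d)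
    (hd1 : d ≤ 1) (hyx : y ≤ x) (hx0 : 0 ≤ x) (hx1 : x ≤ 1)
    (h : x ≤ β * (x - y) ^ (1 / d)) : y ≤ (1 - β ^ (-d)) * x := by
  have hxy : 0 ≤ x - y := sub_nonneg.mpr hyx
  have hdiv : x / β ≤ (x - y) ^ d⁻¹ := by
    rw [div_le_iff₀' hβ, ← one_div]
    exact h
  have hpow : (x / β) ^ d ≤ x - y :=
    (le_rpow_inv_iff_of_pos (div_nonneg hx0 hβ.le) hxy hd0).mp hdiv
  have hlower : β ^ (-d) * x ≤ (x / β) ^ d :=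
    calc β ^ (-d) * x ≤ β ^ (-d) * x ^ d := by
          gcongr
          exact self_le_rpow_of_le_one hx0 hx1 hd1
      _ = (x / β) ^ d := by
          rw [div_rpow hx0 hβ.le, rpow_neg hβ.le, div_eq_mul_inv, mul_comm]
  linarith

/-- The recursion for the geometric rate: if `β ≥ 1`, `0 < d ≤ 1`, and a
sequence satisfies `0 ≤ e_{k+1} ≤ e_k < 1` and `e_k ≤ β(e_k - e_{k+1})^{1/d}`,
then `e_{k+1} ≤ (1 - β^{-d}) e_k`, hence `e_k ≤ (1 - β^{-d})^k e_0` and `e_k → 0`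
geometrically. -/
theorem sequence_geometric_rate
    (β d : ℝ) (hβ : 1 ≤ β) (hd0 : 0 < d) (hd1 : d ≤ 1)
    (e : ℕ → ℝ)
    (hnonneg : ∀ k, 0 ≤ e (k + 1))
    (hmono : ∀ k, e (k + 1) ≤ e k)
    (hlt : ∀ k, e k < 1)
    (hrec : ∀ k, e k ≤ β * (e k - e (k + 1)) ^ ((1 : ℝ) / d)) :
    (∀ k, e (k + 1) ≤ (1 - β ^ (-d)) * e k) ∧
    (∀ k, e k ≤ (1 - β ^ (-d)) ^ k * e 0) ∧
    Tendsto e atTop (nhds 0) := by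
  have hβ0 : 0 < β := one_pos.trans_le hβ
  have hrate0 : 0 ≤ 1 - β ^ (-d) :=
    sub_nonneg.mpr (rpow_le_one_of_one_le_of_nonpos hβ (neg_nonpos.mpr hd0.le))
  have hrate1 : 1 - β ^ (-d) < 1 := sub_lt_self 1 (rpow_pos_of_pos hβ0 _)
  have he0 : ∀ k, 0 ≤ e k
    | 0 => (hnonneg 0).trans (hmono 0)
    | k + 1 => hnonneg k
  have hstep : ∀ k, e (k + 1) ≤ (1 - β ^ (-d)) * e k := fun k =>
    le_one_sub_rpow_neg_mul_of_le_mul_rpow_one_div hβ0 hd0 hd1 (hmono k) (he0 k) (hlt k).le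
      (hrec k)
  have hgeom : ∀ k, e k ≤ (1 - β ^ (-d)) ^ k * e 0 := fun k =>
    le_geom hrate0 k fun j _ => hstep j
  refine ⟨hstep, hgeom, squeeze_zero he0 hgeom ?_⟩
  simpa using (tendsto_pow_atTop_nhds_zero_of_lt_one hrate0 hrate1).mul_const (e 0)
end

section
/- Let f : ℝ^d → ℝ be differentiable, let α > 0, let x_k be gradient descent iterates x_{k+1} = x_k − α∇f(x_k) converging to a point x* with f(x*) = 0 and f(x_k) ≥ 0 for all k, and let 0 < a ≤ 1/2 and m > 0. Suppose that for all sufficiently large k: (i) the Lojasiewicz inequality ‖∇f(x_k)‖ ≥ m f(x_k)^a holds, and (ii) the tail sums e_k := ∑_{j≥k} ‖x_{j+1} − x_j‖ are finite and satisfy e_k ≤ (2/(αm(1−a))) f(x_k)^{1−a}. Then there exist constants C > 0 and b ∈ (0,1), independent of k, such that ‖x_k − x*‖ ≤ C b^k for all k. -/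
/-!
Let `e k` be the length of the path `x k, x (k + 1), …`, so that `‖x k - x*‖ ≤ e k` and
`e k - e (k + 1) = ‖x (k + 1) - x k‖ = α ‖∇f (x k)‖`. Once `f (x k) ≤ 1` we have
`f (x k) ^ (1 - a) ≤ f (x k) ^ a` because `a ≤ 1/2`, so the tail bound and the Lojasiewicz
inequality combine to `α² m² (1 - a) / 2 · e k ≤ e k - e (k + 1)`: the tail lengths, and with
them the distances to `x*`, decay geometrically.
-/

open Filter

noncomputable def tailLength {E : Type*} [SeminormedAddCommGroup E] (x : ℕ → E) (k : ℕ) : ℝ :=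
  ∑' j : ℕ, ‖x (k + j + 1) - x (k + j)‖

section TailLength

variable {E : Type*} [SeminormedAddCommGroup E] {x : ℕ → E} {k : ℕ}

lemma tailLength_nonneg (x : ℕ → E) (k : ℕ) : 0 ≤ tailLength x k :=
  tsum_nonneg fun _ => norm_nonneg _

lemma tailLength_eq_norm_add (hs : Summable fun j => ‖x (k + j + 1) - x (k + j)‖) :
    tailLength x k = ‖x (k + 1) - x k‖ + tailLength x (k + 1) := by
  rw [tailLength, hs.tsum_eq_zero_add, tailLength]
  simp only [add_zero]
  congr 2 with j
  ring_nf

lemma norm_sub_le_tailLength {y : E} (hs : Summable fun j => ‖x (k + j + 1) - x (k + j)‖)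
    (hx : Tendsto x atTop (nhds y)) : ‖x k - y‖ ≤ tailLength x k := by
  have hshift : Tendsto (fun j => x (k + j)) atTop (nhds y) :=
    hx.comp (tendsto_add_atTop_nat k |>.congr fun j => add_comm j k)
  simpa [dist_eq_norm, tailLength, add_assoc] using
    dist_le_tsum_of_dist_le_of_tendsto (f := fun j => x (k + j)) _
      (fun j => (dist_comm _ _).trans_le (dist_eq_norm _ _).le) hs hshift 0

lemma tailLength_succ_le {q b : ℝ} (hb : 1 - q ≤ b)
    (hs : Summable fun j => ‖x (k + j + 1) - x (k + j)‖)
    (hstep : q * tailLength x k ≤ ‖x (k + 1) - x k‖) :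
    tailLength x (k + 1) ≤ b * tailLength x k := by
  have hsplit := tailLength_eq_norm_add hs
  nlinarith [tailLength_nonneg x k]

end TailLength

lemma eventually_le_mul_pow_of_eventually_le_mul {e : ℕ → ℝ} {b : ℝ} (hb : 0 < b)
    (h : ∀ᶠ k in atTop, e (k + 1) ≤ b * e k) : ∃ C, ∀ᶠ k in atTop, e k ≤ C * b ^ k := by
  obtain ⟨N, hN⟩ := eventually_atTop.1 h
  refine ⟨e N / b ^ N, eventually_atTop.2 ⟨N, fun k hk => ?_⟩⟩
  obtain ⟨n, rfl⟩ := Nat.exists_eq_add_of_le hk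
  have hgeom : e (N + n) ≤ b ^ n * e (N + 0) :=
    le_geom (u := fun n => e (N + n)) hb.le n fun j _ => hN (N + j) (Nat.le_add_right _ _)
  calc e (N + n) ≤ b ^ n * e N := hgeom
    _ = e N / b ^ N * b ^ (N + n) := by field_simp; ring

lemma exists_pos_forall_le_mul_pow {u : ℕ → ℝ} {b C : ℝ} (hb : 0 < b)
    (h : ∀ᶠ k in atTop, u k ≤ C * b ^ k) : ∃ C' > 0, ∀ k, u k ≤ C' * b ^ k := by
  have hratio : ∀ᶠ k in atTop, u k / b ^ k ≤ C :=
    h.mono fun k hk => (div_le_iff₀ (pow_pos hb k)).2 hk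
  obtain ⟨B, hB⟩ := (isBoundedUnder_of_eventually_le hratio).bddAbove_range
  refine ⟨max B 1, by positivity, fun k => ?_⟩
  have hk : u k / b ^ k ≤ max B 1 := (hB ⟨k, rfl⟩).trans (le_max_left _ _)
  exact (div_le_iff₀ (pow_pos hb k)).1 hk

lemma Real.rpow_one_sub_le_rpow {φ a : ℝ} (h0 : 0 ≤ φ) (h1 : φ ≤ 1) (ha : a ≤ 1 / 2) :
    φ ^ (1 - a) ≤ φ ^ a :=
  Real.rpow_le_rpow_of_exponent_ge_of_imp h0 h1 (by linarith) fun _ h => by linarith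

lemma tail_le_step_of_lojasiewicz {α m a φ g e : ℝ} (hα : 0 < α) (hm : 0 < m) (ha : a ≤ 1 / 2)
    (hφ0 : 0 ≤ φ) (hφ1 : φ ≤ 1) (hloj : m * φ ^ a ≤ g)
    (htail : e ≤ 2 / (α * m * (1 - a)) * φ ^ (1 - a)) :
    α ^ 2 * m ^ 2 * (1 - a) / 2 * e ≤ α * g := by
  have h1a : 0 < 1 - a := by linarith
  have hscaled : α * m * (1 - a) / 2 * e ≤ φ ^ (1 - a) :=
    calc α * m * (1 - a) / 2 * e
        ≤ α * m * (1 - a) / 2 * (2 / (α * m * (1 - a)) * φ ^ (1 - a)) := by gcongr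
      _ = φ ^ (1 - a) := by field_simp
  calc α ^ 2 * m ^ 2 * (1 - a) / 2 * e = α * m * (α * m * (1 - a) / 2 * e) := by ring
    _ ≤ α * m * φ ^ (1 - a) := by gcongr
    _ ≤ α * m * φ ^ a := by gcongr _ * ?_; exact Real.rpow_one_sub_le_rpow hφ0 hφ1 ha
    _ = α * (m * φ ^ a) := mul_assoc _ _ _
    _ ≤ α * g := by gcongr

theorem gradient_descent_geometric_rate_general
    {d : ℕ} (f : EuclideanSpace ℝ (Fin d) → ℝ) (hf : Differentiable ℝ f)
    (α : ℝ) (hα : 0 < α)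
    (x : ℕ → EuclideanSpace ℝ (Fin d))
    (hiter : ∀ k, x (k + 1) = x k - α • gradient f (x k))
    (xstar : EuclideanSpace ℝ (Fin d))
    (hconv : Tendsto x atTop (nhds xstar))
    (hfstar : f xstar = 0)
    (hfnonneg : ∀ k, 0 ≤ f (x k))
    (a m : ℝ) (ha1 : a ≤ 1 / 2) (hm : 0 < m)
    (hloj : ∀ᶠ k in atTop, m * f (x k) ^ a ≤ ‖gradient f (x k)‖)
    (htail : ∀ᶠ k in atTop,
      Summable (fun j : ℕ => ‖x (k + j + 1) - x (k + j)‖) ∧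
      (∑' j : ℕ, ‖x (k + j + 1) - x (k + j)‖) ≤
        2 / (α * m * (1 - a)) * f (x k) ^ (1 - a)) :
    ∃ C > 0, ∃ b : ℝ, 0 < b ∧ b < 1 ∧ ∀ k, ‖x k - xstar‖ ≤ C * b ^ k := by
  set b := max (1 - α ^ 2 * m ^ 2 * (1 - a) / 2) (1 / 2)
  have hb0 : 0 < b := lt_max_of_lt_right one_half_pos
  have hb1 : b < 1 := by
    have h1a : 0 < 1 - a := by linarith
    have hq : 0 < α ^ 2 * m ^ 2 * (1 - a) / 2 := by positivity
    exact max_lt (by linarith) one_half_lt_one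
  have hsmall : ∀ᶠ k in atTop, f (x k) ≤ 1 := by
    have hfx := (hf.continuous.tendsto xstar).comp hconv
    rw [hfstar] at hfx
    exact hfx.eventually (ge_mem_nhds one_pos)
  have hcontr : ∀ᶠ k in atTop, tailLength x (k + 1) ≤ b * tailLength x k := by
    filter_upwards [hloj, htail, hsmall] with k hlojk ⟨hs, hek⟩ hfk
    refine tailLength_succ_le (le_max_left _ _) hs ?_
    rw [hiter k, sub_sub_cancel_left, norm_neg, norm_smul, Real.norm_of_nonneg hα.le]
    exact tail_le_step_of_lojasiewicz hα hm ha1 (hfnonneg k) hfk hlojk hek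
  have hdist : ∀ᶠ k in atTop, ‖x k - xstar‖ ≤ tailLength x k :=
    htail.mono fun k hk => norm_sub_le_tailLength hk.1 hconv
  obtain ⟨C, hC⟩ := eventually_le_mul_pow_of_eventually_le_mul hb0 hcontr
  obtain ⟨C', hC', hle⟩ :=
    exists_pos_forall_le_mul_pow hb0 ((hdist.and hC).mono fun k hk => hk.1.trans hk.2)
  exact ⟨C', hC', b, hb0, hb1, hle⟩

/-- Convergence rate of gradient descent under the Lojasiewicz gradient
inequality with exponent `0 < a ≤ 1/2`: the iterates converge to the limit `x*`
at a geometric rate. -/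
theorem gradient_descent_geometric_rate
    {d : ℕ} (f : EuclideanSpace ℝ (Fin d) → ℝ) (hf : Differentiable ℝ f)
    (α : ℝ) (hα : 0 < α)
    (x : ℕ → EuclideanSpace ℝ (Fin d))
    (hiter : ∀ k, x (k + 1) = x k - α • gradient f (x k))
    (xstar : EuclideanSpace ℝ (Fin d))
    (hconv : Tendsto x atTop (nhds xstar))
    (hfstar : f xstar = 0)
    (hfnonneg : ∀ k, 0 ≤ f (x k))
    (a m : ℝ) (ha0 : 0 < a) (ha1 : a ≤ 1 / 2) (hm : 0 < m)
    (hloj : ∀ᶠ k in atTop, m * f (x k) ^ a ≤ ‖gradient f (x k)‖)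
    (htail : ∀ᶠ k in atTop,
      Summable (fun j : ℕ => ‖x (k + j + 1) - x (k + j)‖) ∧
      (∑' j : ℕ, ‖x (k + j + 1) - x (k + j)‖) ≤
        2 / (α * m * (1 - a)) * f (x k) ^ (1 - a)) :
    ∃ C > 0, ∃ b : ℝ, 0 < b ∧ b < 1 ∧ ∀ k, ‖x k - xstar‖ ≤ C * b ^ k :=
  gradient_descent_geometric_rate_general f hf α hα x hiter xstar hconv hfstar hfnonneg a m ha1 hm
    hloj htail
end
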